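/- Let ξ : ℝ → ℂ be twice differentiable with 0 < |ξ(t)| < 1 for all t, satisfying the geodesic equation ξ''(t) = (conj(ξ(t))/(1 − |ξ(t)|²) + 3·conj(ξ(t))/(1 + |ξ(t)|²))·(ξ'(t))², and suppose Im(conj(ξ(0))·ξ'(0)) ≠ 0. Then there exist a, b with 0 < a ≤ b < 1 such that a ≤ |ξ(t)| ≤ b for all t ∈ ℝ. -/

import Mathlib

/-!
Put `u = |ξ|²` and `G(u) = (1 - u)/(1 + u)³`. Since `G'/G = -(1/(1 - u) + 3/(1 + u))` is minus
the coefficient of the geodesic equation, `G` is an integrating factor for it: the energy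
`I₁ = G(u)|ξ'|²` and the angular momentum `I₂ = G(u) Im(ξ̄ξ')` are conserved. Cauchy–Schwarz,
`Im(ξ̄ξ')² ≤ u|ξ'|²`, then gives `u G(u) ≥ I₂²/I₁ =: c`, and `c > 0` because `I₂ ≠ 0`. On `[0, 1]`
we have `u G(u) ≤ min(u, 1 - u)`, so `c ≤ |ξ|² ≤ 1 - c` for all time.
-/

open ComplexConjugate

theorem HasDerivAt.complex_im {f : ℝ → ℂ} {f' : ℂ} {t : ℝ} (h : HasDerivAt f f' t) :
    HasDerivAt (fun s => (f s).im) f'.im t := by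
  have h := Complex.imCLM.hasFDerivAt.comp_hasDerivAt t h
  simp only [Function.comp_def, Complex.imCLM_apply] at h
  exact h

theorem HasDerivAt.complex_norm_sq {f : ℝ → ℂ} {f' : ℂ} {t : ℝ} (h : HasDerivAt f f' t) :
    HasDerivAt (fun s => ‖f s‖ ^ 2) (2 * (conj (f t) * f').re) t := by
  simpa only [Complex.inner, mul_comm f'] using h.norm_sq

theorem sq_im_conj_mul_le (z w : ℂ) : (conj z * w).im ^ 2 ≤ ‖z‖ ^ 2 * ‖w‖ ^ 2 := by
  rw [← mul_pow, ← Complex.norm_conj z, ← norm_mul, ← sq_abs]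
  exact pow_le_pow_left₀ (abs_nonneg _) (Complex.abs_im_le_norm _) 2

theorem comp_mul_eq_of_hasDerivAt {G K u u' y : ℝ → ℝ}
    (hG : ∀ t, HasDerivAt G (-K (u t) * G (u t)) (u t))
    (hu : ∀ t, HasDerivAt u (u' t) t) (hy : ∀ t, HasDerivAt y (K (u t) * u' t * y t) t)
    (s t : ℝ) : G (u s) * y s = G (u t) * y t := by
  have hzero (t : ℝ) : HasDerivAt (fun r => G (u r) * y r) 0 t :=
    (((hG t).comp t (hu t)).mul (hy t)).congr_deriv (by simp only [Function.comp]; ring)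
  exact is_const_of_deriv_eq_zero (fun t => (hzero t).differentiableAt)
    (fun t => (hzero t).deriv) s t

theorem exists_bounds_of_sq_bounds {α : Type*} [Nonempty α] {f : α → ℝ} {c : ℝ} (hc : 0 < c)
    (hf : ∀ t, 0 ≤ f t) (h : ∀ t, c ≤ f t ^ 2 ∧ f t ^ 2 ≤ 1 - c) :
    ∃ a b : ℝ, 0 < a ∧ a ≤ b ∧ b < 1 ∧ ∀ t, a ≤ f t ∧ f t ≤ b := by
  obtain ⟨t₀⟩ := ‹Nonempty α›
  refine ⟨√c, √(1 - c), Real.sqrt_pos.2 hc, Real.sqrt_le_sqrt ((h t₀).1.trans (h t₀).2),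
    (Real.sqrt_lt' one_pos).2 (by linarith), fun t => ?_⟩
  rw [← Real.sqrt_sq (hf t)]
  exact ⟨Real.sqrt_le_sqrt (h t).1, Real.sqrt_le_sqrt (h t).2⟩

noncomputable section

namespace TwistingSphere

def conformalFactor (u : ℝ) : ℝ := (1 - u) / (1 + u) ^ 3

/-- The geodesic equation reads `ξ'' = geodesicCoeff |ξ|² * ξ̄ * ξ'²`. -/
def geodesicCoeff (u : ℝ) : ℝ := (1 - u)⁻¹ + 3 * (1 + u)⁻¹

theorem hasDerivAt_conformalFactor {u : ℝ} (h₁ : u ≠ 1) (h₂ : u ≠ -1) :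
    HasDerivAt conformalFactor (-geodesicCoeff u * conformalFactor u) u := by
  have h₁' : 1 - u ≠ 0 := sub_ne_zero.mpr h₁.symm
  have h₂' : 1 + u ≠ 0 := fun h => h₂ (by linarith)
  refine (((hasDerivAt_id' u).const_sub 1).div (((hasDerivAt_id' u).const_add 1).pow 3)
    (pow_ne_zero 3 h₂')).congr_deriv ?_
  simp only [geodesicCoeff, conformalFactor, Pi.pow_apply]
  field_simp
  ring

theorem conformalFactor_pos {u : ℝ} (h₀ : 0 ≤ u) (h₁ : u < 1) : 0 < conformalFactor u :=
  div_pos (by linarith) (by positivity)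

theorem mul_conformalFactor_le {u : ℝ} (h₀ : 0 ≤ u) (h₁ : u ≤ 1) :
    u * conformalFactor u ≤ u ∧ u * conformalFactor u ≤ 1 - u := by
  have hG : conformalFactor u ≤ 1 - u :=
    div_le_self (by linarith) (one_le_pow₀ (by linarith))
  constructor <;> nlinarith

theorem im_conj_mul_geodesic (z w : ℂ) (k : ℝ) :
    (conj z * (k * (conj z * w ^ 2))).im = k * (2 * (conj z * w).re) * (conj z * w).im := by
  simp only [Complex.mul_im, Complex.mul_re, Complex.conj_re, Complex.conj_im, pow_two,
    Complex.ofReal_re, Complex.ofReal_im]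
  ring

theorem re_conj_mul_geodesic (z w : ℂ) (k : ℝ) :
    2 * (conj w * (k * (conj z * w ^ 2))).re = k * (2 * (conj z * w).re) * ‖w‖ ^ 2 := by
  rw [← Complex.normSq_eq_norm_sq, Complex.normSq_apply]
  simp only [Complex.mul_im, Complex.mul_re, Complex.conj_re, Complex.conj_im, pow_two,
    Complex.ofReal_re, Complex.ofReal_im]
  ring

def energy (ξ ξ' : ℝ → ℂ) (t : ℝ) : ℝ := conformalFactor (‖ξ t‖ ^ 2) * ‖ξ' t‖ ^ 2

def angularMomentum (ξ ξ' : ℝ → ℂ) (t : ℝ) : ℝ :=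
  conformalFactor (‖ξ t‖ ^ 2) * (conj (ξ t) * ξ' t).im

theorem sq_angularMomentum_le (ξ ξ' : ℝ → ℂ) (t : ℝ) :
    angularMomentum ξ ξ' t ^ 2 ≤ ‖ξ t‖ ^ 2 * conformalFactor (‖ξ t‖ ^ 2) * energy ξ ξ' t := by
  have h := mul_le_mul_of_nonneg_left (sq_im_conj_mul_le (ξ t) (ξ' t))
    (sq_nonneg (conformalFactor (‖ξ t‖ ^ 2)))
  simp only [angularMomentum, energy]
  linarith

section Geodesic

variable {ξ ξ' ξ'' : ℝ → ℂ}

theorem hasDerivAt_conformalFactor_norm_sq (hlt : ∀ t, ‖ξ t‖ < 1) (t : ℝ) :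
    HasDerivAt conformalFactor (-geodesicCoeff (‖ξ t‖ ^ 2) * conformalFactor (‖ξ t‖ ^ 2))
      (‖ξ t‖ ^ 2) := by
  have h₀ : 0 ≤ ‖ξ t‖ ^ 2 := sq_nonneg _
  exact hasDerivAt_conformalFactor (pow_lt_one₀ (norm_nonneg _) (hlt t) two_ne_zero).ne
    (by linarith)

theorem energy_eq (hξ : ∀ t, HasDerivAt ξ (ξ' t) t) (hξ' : ∀ t, HasDerivAt ξ' (ξ'' t) t)
    (hgeo : ∀ t, ξ'' t = geodesicCoeff (‖ξ t‖ ^ 2) * (conj (ξ t) * ξ' t ^ 2))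
    (hlt : ∀ t, ‖ξ t‖ < 1) (s t : ℝ) : energy ξ ξ' s = energy ξ ξ' t :=
  comp_mul_eq_of_hasDerivAt (hasDerivAt_conformalFactor_norm_sq hlt)
    (fun t => (hξ t).complex_norm_sq)
    (fun t => by simpa only [hgeo t, re_conj_mul_geodesic] using (hξ' t).complex_norm_sq) s t

theorem angularMomentum_eq (hξ : ∀ t, HasDerivAt ξ (ξ' t) t)
    (hξ' : ∀ t, HasDerivAt ξ' (ξ'' t) t)
    (hgeo : ∀ t, ξ'' t = geodesicCoeff (‖ξ t‖ ^ 2) * (conj (ξ t) * ξ' t ^ 2))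
    (hlt : ∀ t, ‖ξ t‖ < 1) (s t : ℝ) : angularMomentum ξ ξ' s = angularMomentum ξ ξ' t := by
  refine comp_mul_eq_of_hasDerivAt (y := fun s => (conj (ξ s) * ξ' s).im)
    (hasDerivAt_conformalFactor_norm_sq hlt) (fun t => (hξ t).complex_norm_sq) (fun t => ?_) s t
  refine ((hξ t).star.mul (hξ' t)).complex_im.congr_deriv ?_
  rw [← im_conj_mul_geodesic, ← hgeo t, Complex.add_im]
  simp [Complex.mul_im, mul_comm]

end Geodesic

end TwistingSphere

end

open TwistingSphere

/-- Oscillation of geodesics with nonzero angular momentum on the twisting holomorphic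
sphere: a geodesic `ξ` with `0 < |ξ| < 1` and `Im(ξ̄(0)ξ'(0)) ≠ 0` stays at a bounded
distance strictly between the pole and the lagrangian circle. -/
theorem geodesic_oscillation (ξ ξ' ξ'' : ℝ → ℂ)
    (hξ : ∀ t : ℝ, HasDerivAt ξ (ξ' t) t)
    (hξ' : ∀ t : ℝ, HasDerivAt ξ' (ξ'' t) t)
    (hrange : ∀ t : ℝ, 0 < ‖ξ t‖ ∧ ‖ξ t‖ < 1)
    (hgeo : ∀ t : ℝ, ξ'' t =
      ((starRingEnd ℂ) (ξ t) / (1 - ((‖ξ t‖ : ℝ) : ℂ) ^ 2) +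
        3 * (starRingEnd ℂ) (ξ t) / (1 + ((‖ξ t‖ : ℝ) : ℂ) ^ 2)) * (ξ' t) ^ 2)
    (hI₂ : ((starRingEnd ℂ) (ξ 0) * ξ' 0).im ≠ 0) :
    ∃ a b : ℝ, 0 < a ∧ a ≤ b ∧ b < 1 ∧
      ∀ t : ℝ, a ≤ ‖ξ t‖ ∧ ‖ξ t‖ ≤ b := by
  have hlt (t : ℝ) : ‖ξ t‖ < 1 := (hrange t).2
  have hlt_sq (t : ℝ) : ‖ξ t‖ ^ 2 < 1 := pow_lt_one₀ (norm_nonneg _) (hlt t) two_ne_zero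
  have hgeo' (t : ℝ) : ξ'' t = geodesicCoeff (‖ξ t‖ ^ 2) * (conj (ξ t) * ξ' t ^ 2) := by
    rw [hgeo t, geodesicCoeff]
    push_cast
    ring
  have hG (t : ℝ) : 0 < conformalFactor (‖ξ t‖ ^ 2) := conformalFactor_pos (sq_nonneg _) (hlt_sq t)
  have hI₁ : 0 < energy ξ ξ' 0 :=
    mul_pos (hG 0) (pow_pos (norm_pos_iff.2 fun h => hI₂ (by simp [h])) 2)
  have hc : 0 < angularMomentum ξ ξ' 0 ^ 2 / energy ξ ξ' 0 :=
    div_pos (pow_two_pos_of_ne_zero (mul_ne_zero (hG 0).ne' hI₂)) hI₁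
  refine exists_bounds_of_sq_bounds hc (fun t => norm_nonneg _) fun t => ?_
  have hbound : angularMomentum ξ ξ' 0 ^ 2 / energy ξ ξ' 0 ≤
      ‖ξ t‖ ^ 2 * conformalFactor (‖ξ t‖ ^ 2) := by
    rw [div_le_iff₀ hI₁, angularMomentum_eq hξ hξ' hgeo' hlt 0 t, energy_eq hξ hξ' hgeo' hlt 0 t]
    exact sq_angularMomentum_le ξ ξ' t
  have hmin := mul_conformalFactor_le (sq_nonneg ‖ξ t‖) (hlt_sq t).le
  constructor <;> linarith
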